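/- Let f̄_i^g ∈ ℚ[α,β] denote the image of f_i^g under the ℚ-algebra homomorphism ℚ[α,β,γ] → ℚ[α,β] sending γ to 0, and set Ī_g := (f̄_1^g, f̄_2^g) ⊆ ℚ[α,β]. Then for every integer g ≥ 1: f̄_1^{g+1} = α·f̄_1^g + g²·f̄_2^g, f̄_2^{g+1} = β·f̄_1^g, and β·Ī_g ⊆ Ī_{g+1}. -/

import Mathlib

noncomputable section

open PowerSeries

/-- The polynomial ring `ℚ[α,β,γ]`. -/
abbrev R3 : Type := MvPolynomial (Fin 3) ℚ

/-- The fraction field `K = ℚ(α,β,γ)`. -/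
abbrev K3 : Type := FractionRing R3

/-- The image of `α` in `K`. -/
def al : K3 := algebraMap R3 K3 (MvPolynomial.X 0)
/-- The image of `β` in `K`. -/
def be : K3 := algebraMap R3 K3 (MvPolynomial.X 1)
/-- The image of `γ` in `K`. -/
def ga : K3 := algebraMap R3 K3 (MvPolynomial.X 2)

/-- The binomial series `(1 - β t²)^{-1/2} = ∑_{n≥0} C(2n,n) (β t²/4)^n`. -/
def Sq : PowerSeries K3 :=
  PowerSeries.mk fun k => if k % 2 = 0 then
    ((k.choose (k / 2) : ℚ) : K3) * (be / 4) ^ (k / 2) else 0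

/-- The exponent `E(t) = α t + (α + 2γ/β) ∑_{m≥1} β^m t^{2m+1}/(2m+1)`;
its coefficient in degree `k = 2m+1 ≥ 3` is `(α + 2γ/β) β^{(k-1)/2} / k`. -/
def Ex : PowerSeries K3 :=
  PowerSeries.mk fun k =>
    if k = 1 then al
    else if k % 2 = 1 then (al + 2 * ga / be) * be ^ ((k - 1) / 2) / (k : K3)
    else 0

/-- The formal exponential `exp E = ∑_n E^n/n!` of the power series `E`
(which has zero constant term, so each coefficient is a finite sum). -/
def ExpEx : PowerSeries K3 :=
  PowerSeries.mk fun k =>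
    ∑ n ∈ Finset.range (k + 1), PowerSeries.coeff (R := K3) k (Ex ^ n) / (n.factorial : K3)

/-- The generating function `Φ(t) = (1 - βt²)^{-1/2} exp(E(t))`. -/
def Phi : PowerSeries K3 := Sq * ExpEx

/-- `φ_k`, the `k`-th coefficient of `Φ`. -/
def phi (k : ℕ) : K3 := PowerSeries.coeff (R := K3) k Phi

/-- `Φ^{(r)} = r! φ_r`, the `r`-th formal derivative of `Φ` at `t = 0`. -/
def PhiD (r : ℕ) : K3 := (r.factorial : K3) * phi r

/-- `f_1^g := Φ^{(g)}`. -/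
def f1 (g : ℕ) : K3 := PhiD g
/-- `f_2^g := (1/g²)(Φ^{(g+1)} - α Φ^{(g)})`. -/
def f2 (g : ℕ) : K3 := (1 / (g : K3) ^ 2) * (PhiD (g + 1) - al * PhiD g)
/-- `f_3^g := (1/(2g(g+1)))(Φ^{(g+2)} - α Φ^{(g+1)} - (g+1)² β Φ^{(g)})`. -/
def f3 (g : ℕ) : K3 :=
  (1 / (2 * (g : K3) * ((g : K3) + 1))) *
    (PhiD (g + 2) - al * PhiD (g + 1) - ((g : K3) + 1) ^ 2 * be * PhiD g)

/-- The `ℚ`-algebra homomorphism `ℚ[α,β,γ] → ℚ[α,β]` sending `γ` to `0`. -/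
def redGamma : R3 →ₐ[ℚ] MvPolynomial (Fin 2) ℚ :=
  MvPolynomial.aeval ![MvPolynomial.X 0, MvPolynomial.X 1, 0]

lemma algR3_injective : Function.Injective (algebraMap R3 K3) :=
  IsFractionRing.injective R3 K3

lemma be_ne : be ≠ 0 := by
  simp only [be, ne_eq, map_eq_zero_iff _ algR3_injective]
  exact MvPolynomial.X_ne_zero 1

lemma natK_ne {n : ℕ} (h : n ≠ 0) : (n : K3) ≠ 0 := Nat.cast_ne_zero.mpr h

lemma choose_rec (m : ℕ) :
    (2*m+4) * Nat.choose (2*m+4) (m+2) = 4 * ((2*m+3) * Nat.choose (2*m+2) (m+1)) := by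
  have h := Nat.succ_mul_centralBinom_succ (m+1)
  have e1 : Nat.choose (2*m+4) (m+2) = Nat.centralBinom (m+2) := by
    rw [Nat.centralBinom]; congr 1
  have e2 : Nat.choose (2*m+2) (m+1) = Nat.centralBinom (m+1) := by
    rw [Nat.centralBinom]; congr 1
  rw [e1, e2]
  have h' : (m+2) * Nat.centralBinom (m+2) = 2*(2*m+3) * Nat.centralBinom (m+1) := by
    rw [show (2*m+3) = 2*(m+1)+1 by ring]; exact h
  calc (2*m+4) * Nat.centralBinom (m+2) = 2*((m+2) * Nat.centralBinom (m+2)) := by ring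
    _ = 2*(2*(2*m+3) * Nat.centralBinom (m+1)) := by rw [h']
    _ = 4 * ((2*m+3) * Nat.centralBinom (m+1)) := by ring

-- ODE for Sq : (1 - βX²) Sq' = βX Sq

lemma sq_ode : (1 - C (R := K3) be * X ^ 2) * derivative K3 Sq = C (R := K3) be * X * Sq := by
  ext k
  rw [sub_mul, one_mul, map_sub, mul_assoc, coeff_C_mul, mul_assoc, coeff_C_mul]
  match k with
  | 0 =>
    simp [coeff_derivative, Sq, coeff_mk, Nat.choose]
  | 1 =>
    rw [coeff_X_pow_mul', if_neg (by norm_num), coeff_succ_X_mul, coeff_derivative]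
    simp [Sq]
    ring
  | (n+2) =>
    rw [coeff_X_pow_mul', if_pos (by omega), coeff_succ_X_mul, coeff_derivative,
      coeff_derivative]
    have hn : n + 2 - 2 = n := by omega
    rw [hn]
    obtain ⟨m, rfl | rfl⟩ := Nat.even_or_odd' n
    · -- n = 2m : all odd coefficients vanish
      have h1 : (2*m+2+1) % 2 = 1 := by omega
      have h2 : (2*m+1) % 2 = 1 := by omega
      simp [Sq, h1, h2, Nat.add_mod]
    · -- n = 2m+1
      have h1 : (2*m+1+2+1) % 2 = 0 := by omega
      have h2 : (2*m+1+1) % 2 = 0 := by omega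
      have h3 : (2*m+1+2+1)/2 = m+2 := by omega
      have h4 : (2*m+1+1)/2 = m+1 := by omega
      simp only [Sq, coeff_mk, h1, h2, h3, h4, if_pos]
      have e1 : (2*m+1+2+1).choose (m+2) = (2*m+4).choose (m+2) := by congr 1
      have e2 : (2*m+1+1).choose (m+1) = (2*m+2).choose (m+1) := by congr 1
      rw [e1, e2]
      have hc := congrArg (Nat.cast : ℕ → K3) (choose_rec m)
      push_cast at hc ⊢
      rw [pow_succ]
      linear_combination ((be/4)^(m+1) * be / 4) * hc

-- ODE for Ex : (1 - βX²) Ex' = α + 2γX²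

lemma ex_ode : (1 - C (R := K3) be * X ^ 2) * derivative K3 Ex = C (R := K3) al + 2 * C (R := K3) ga * X ^ 2 := by
  ext k
  have h2 : (2 : PowerSeries K3) * C (R := K3) ga = C (R := K3) (2 * ga) := by
    rw [map_mul, map_ofNat]
  rw [sub_mul, one_mul, map_sub, mul_assoc, coeff_C_mul, map_add, coeff_C,
    h2, coeff_mul_X_pow', coeff_C, coeff_X_pow_mul']
  match k with
  | 0 => simp [coeff_derivative, Ex]
  | 1 => simp [coeff_derivative, Ex]
  | 2 =>
    have hb := be_ne
    norm_num [coeff_derivative, Ex]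
    field_simp
    ring
  | 3 =>
    simp [coeff_derivative, Ex]
  | (n+4) =>
    simp only [if_pos (by omega : 2 ≤ n + 4), if_neg (by omega : ¬ (n+4) = 0),
      coeff_derivative]
    have hn : n + 4 - 2 = n + 2 := by omega
    rw [hn]
    obtain ⟨m, rfl | rfl⟩ := Nat.even_or_odd' n
    · -- n = 2m : indices 2m+5, 2m+3 odd
      have h1 : ¬ (2*m+4+1) = 1 := by omega
      have h2 : (2*m+4+1) % 2 = 1 := by omega
      have h3 : ¬ (2*m+2+1) = 1 := by omega
      have h4 : (2*m+2+1) % 2 = 1 := by omega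
      have h5 : (2*m+4+1-1)/2 = m+2 := by omega
      have h6 : (2*m+2+1-1)/2 = m+1 := by omega
      simp only [Ex, coeff_mk, if_neg h1, if_pos h2, if_neg h3, if_pos h4, h5, h6]
      have c1 : ((2*m+4+1 : ℕ) : K3) ≠ 0 := natK_ne (by omega)
      have c2 : ((2*m+2+1 : ℕ) : K3) ≠ 0 := natK_ne (by omega)
      have hb := be_ne
      push_cast at c1 c2 ⊢
      have c3 : (3 + (m:K3)*2) ≠ 0 := by ring_nf at c2 ⊢; exact c2
      field_simp
      ring_nf
      field_simp
      ring
    · -- n = 2m+1 : even indices, all zero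
      have h1 : ¬ (2*m+1+4+1) = 1 := by omega
      have h2 : ¬ (2*m+1+4+1) % 2 = 1 := by omega
      have h3 : ¬ (2*m+1+2+1) = 1 := by omega
      have h4 : ¬ (2*m+1+2+1) % 2 = 1 := by omega
      simp [Ex, h1, h2, h3, h4]

lemma ex_const : constantCoeff (R := K3) Ex = 0 := by
  simp [Ex, ← coeff_zero_eq_constantCoeff]

lemma coeff_ex_pow_eq_zero {n k : ℕ} (h : k < n) : coeff (R := K3) k (Ex ^ n) = 0 := by
  have hd : (X : PowerSeries K3) ^ n ∣ Ex ^ n :=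
    pow_dvd_pow_of_dvd (X_dvd_iff.mpr ex_const) n
  obtain ⟨f, hf⟩ := hd
  rw [hf, coeff_X_pow_mul', if_neg (by omega)]

lemma expEx_coeff_ext (k N : ℕ) (h : k ≤ N) :
    coeff (R := K3) k ExpEx = ∑ n ∈ Finset.range (N + 1), coeff (R := K3) k (Ex ^ n) / (n.factorial : K3) := by
  rw [ExpEx, coeff_mk]
  refine Finset.sum_subset (Finset.range_subset_range.2 (by omega)) fun n _ hn => ?_
  rw [coeff_ex_pow_eq_zero (by simp at hn ⊢; omega), zero_div]

lemma expEx_deriv : derivative K3 ExpEx = derivative K3 Ex * ExpEx := by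
  ext k
  rw [coeff_derivative, expEx_coeff_ext (k+1) (k+1) le_rfl, Finset.sum_mul,
    Finset.sum_range_succ']
  have h0 : coeff (R := K3) (k+1) (Ex ^ 0) / (Nat.factorial 0 : K3) * ((k:K3)+1) = 0 := by
    rw [pow_zero, coeff_one, if_neg (by omega)]; simp
  rw [h0, add_zero]
  have hL : ∀ m, coeff (R := K3) (k+1) (Ex ^ (m+1)) / ((m+1).factorial : K3) * ((k:K3)+1)
      = coeff (R := K3) k (Ex ^ m * derivative K3 Ex) / (m.factorial : K3) := by
    intro m
    have hd : coeff (R := K3) k (derivative K3 (Ex ^ (m+1)))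
        = ((m:K3)+1) * coeff (R := K3) k (Ex ^ m * derivative K3 Ex) := by
      rw [Derivation.leibniz_pow, Nat.add_sub_cancel, smul_eq_mul, map_nsmul, nsmul_eq_mul]
      push_cast
      ring
    have hd2 : coeff (R := K3) (k+1) (Ex ^ (m+1)) * ((k:K3)+1)
        = coeff (R := K3) k (derivative K3 (Ex ^ (m+1))) := (coeff_derivative _ _).symm
    have hfac : (((m+1).factorial : ℕ) : K3) = ((m:K3)+1) * (m.factorial : K3) := by
      push_cast [Nat.factorial_succ]; ring
    have hne : ((m:K3)+1) ≠ 0 := by exact_mod_cast natK_ne (Nat.succ_ne_zero m)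
    rw [div_mul_eq_mul_div, hd2, hd, hfac, mul_div_mul_left _ _ hne]
  rw [Finset.sum_congr rfl fun m _ => hL m]
  -- now the right-hand side
  have hR : coeff (R := K3) k (derivative K3 Ex * ExpEx)
      = ∑ m ∈ Finset.range (k+1),
          coeff (R := K3) k (Ex ^ m * derivative K3 Ex) / (m.factorial : K3) := by
    rw [coeff_mul]
    have step1 : ∀ p ∈ Finset.HasAntidiagonal.antidiagonal k,
        coeff (R := K3) p.1 (derivative K3 Ex) * coeff (R := K3) p.2 ExpEx
        = ∑ m ∈ Finset.range (k+1),
            coeff (R := K3) p.1 (derivative K3 Ex) * coeff (R := K3) p.2 (Ex^m) / (m.factorial:K3) := by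
      intro p hp
      rw [expEx_coeff_ext p.2 k (Finset.HasAntidiagonal.antidiagonal.snd_le hp), Finset.mul_sum]
      exact Finset.sum_congr rfl fun m _ => (mul_div_assoc _ _ _).symm
    rw [Finset.sum_congr rfl step1, Finset.sum_comm]
    refine Finset.sum_congr rfl fun m _ => ?_
    rw [mul_comm (Ex ^ m), coeff_mul, Finset.sum_div]
  rw [hR]

lemma phi_ode : (1 - C (R := K3) be * X ^ 2) * derivative K3 Phi
    = (C (R := K3) al + C (R := K3) be * X + 2 * C (R := K3) ga * X ^ 2) * Phi := by
  have h1 := sq_ode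
  have h2 := ex_ode
  have h3 := expEx_deriv
  rw [Phi, Derivation.leibniz, smul_eq_mul, smul_eq_mul, h3]
  ring_nf
  ring_nf at h1 h2
  linear_combination ExpEx * h1 + Sq * ExpEx * h2

lemma phi_rec (j : ℕ) :
    ((j:K3)+3) * phi (j+3) = al * phi (j+2) + ((j:K3)+2) * be * phi (j+1) + 2 * ga * phi j := by
  have h := congrArg (coeff (R := K3) (j+2)) phi_ode
  rw [sub_mul, one_mul, map_sub, mul_assoc, coeff_C_mul, coeff_X_pow_mul',
    if_pos (by omega : 2 ≤ j+2), add_mul, add_mul, map_add, map_add, coeff_C_mul,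
    mul_assoc, coeff_C_mul, coeff_succ_X_mul, coeff_derivative, coeff_derivative] at h
  have h2 : (2 : PowerSeries K3) * C (R := K3) ga = C (R := K3) (2 * ga) := by rw [map_mul, map_ofNat]
  rw [show 2 * C (R := K3) ga * X ^ 2 * Phi = C (R := K3) (2*ga) * (X ^ 2 * Phi) by rw [← h2]; ring,
    coeff_C_mul, coeff_X_pow_mul', if_pos (by omega : 2 ≤ j+2)] at h
  have e1 : j + 2 - 2 = j := by omega
  have e2 : j + 2 + 1 = j + 3 := by omega
  rw [e1, e2] at h
  simp only [phi]
  push_cast at h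
  linear_combination h

lemma phi_rec1 : (2:K3) * phi 2 = al * phi 1 + be * phi 0 := by
  have h := congrArg (coeff (R := K3) 1) phi_ode
  rw [sub_mul, one_mul, map_sub, mul_assoc, coeff_C_mul, coeff_X_pow_mul',
    if_neg (by omega : ¬ 2 ≤ 1), add_mul, add_mul, map_add, map_add, coeff_C_mul,
    mul_assoc, coeff_C_mul, coeff_succ_X_mul, coeff_derivative] at h
  have h2 : (2 : PowerSeries K3) * C (R := K3) ga = C (R := K3) (2 * ga) := by rw [map_mul, map_ofNat]
  rw [show 2 * C (R := K3) ga * X ^ 2 * Phi = C (R := K3) (2*ga) * (X ^ 2 * Phi) by rw [← h2]; ring,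
    coeff_C_mul, coeff_X_pow_mul', if_neg (by omega : ¬ 2 ≤ 1)] at h
  simp only [phi]
  push_cast at h
  linear_combination h

lemma key1 (g : ℕ) (hg : g ≠ 0) : f1 (g+1) = al * f1 g + (g:K3)^2 * f2 g := by
  have h : ((g:K3)) ≠ 0 := natK_ne hg
  simp only [f1, f2, PhiD]
  field_simp
  ring

lemma key2 (j : ℕ) :
    f2 (j+2) = be * f1 (j+1) + ga * (2 * ((j+1).factorial : K3) / ((j:K3)+2) * phi j) := by
  have h := phi_rec j
  have c2 : ((j:K3)+2) ≠ 0 := by exact_mod_cast natK_ne (Nat.succ_ne_zero (j+1))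
  have hf2 : ((j+2).factorial : K3) = ((j:K3)+2) * ((j+1).factorial : K3) := by
    rw [show j+2 = (j+1)+1 from rfl, Nat.factorial_succ]; push_cast; ring
  have hf3 : ((j+3).factorial : K3) = ((j:K3)+3) * (((j:K3)+2) * ((j+1).factorial : K3)) := by
    rw [show j+3 = (j+2)+1 from rfl, Nat.factorial_succ]; push_cast [hf2]; ring
  simp only [f2, f1, PhiD, show j+2+1 = j+3 from rfl]
  rw [hf3, hf2]
  push_cast
  field_simp
  linear_combination ((j+1).factorial : K3) * h

/-- Elements of `K3` expressible with denominator a power of `β`. -/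

def Tl : Subalgebra ℚ K3 where
  carrier := {x | ∃ n : ℕ, ∃ r : R3, be ^ n * x = algebraMap R3 K3 r}
  mul_mem' := by
    rintro x y ⟨n, r, hr⟩ ⟨m, s, hs⟩
    exact ⟨n + m, r * s, by rw [map_mul, ← hr, ← hs]; ring⟩
  one_mem' := ⟨0, 1, by simp⟩
  zero_mem' := ⟨0, 0, by simp⟩
  add_mem' := by
    rintro x y ⟨n, r, hr⟩ ⟨m, s, hs⟩
    refine ⟨n + m, MvPolynomial.X 1 ^ m * r + MvPolynomial.X 1 ^ n * s, ?_⟩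
    rw [map_add, map_mul, map_mul, map_pow, map_pow, ← hr, ← hs,
      show algebraMap R3 K3 (MvPolynomial.X 1) = be from rfl]
    ring
  algebraMap_mem' := fun q =>
    ⟨0, algebraMap ℚ R3 q, by rw [pow_zero, one_mul, ← IsScalarTower.algebraMap_apply]⟩

lemma al_mem : al ∈ Tl := ⟨0, MvPolynomial.X 0, by rw [pow_zero, one_mul]; rfl⟩

lemma be_mem : be ∈ Tl := ⟨0, MvPolynomial.X 1, by rw [pow_zero, one_mul]; rfl⟩

lemma ga_mem : ga ∈ Tl := ⟨0, MvPolynomial.X 2, by rw [pow_zero, one_mul]; rfl⟩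

lemma ratCast_mem (q : ℚ) : ((q : ℚ) : K3) ∈ Tl := by
  have := Tl.algebraMap_mem q
  rwa [eq_ratCast (algebraMap ℚ K3) q] at this

lemma div_be_mem {x : K3} (hx : x ∈ Tl) : x / be ∈ Tl := by
  obtain ⟨n, r, hr⟩ := hx
  refine ⟨n + 1, r, ?_⟩
  rw [← hr, pow_succ]
  have hb := be_ne
  field_simp

lemma div_ratCast_mem (q : ℚ) {x : K3} (hx : x ∈ Tl) : x / ((q : ℚ) : K3) ∈ Tl := by
  rcases eq_or_ne q 0 with rfl | hq
  · simpa using Tl.zero_mem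
  · have : x / ((q : ℚ) : K3) = ((q⁻¹ : ℚ) : K3) * x := by
      rw [Rat.cast_inv]; field_simp
    rw [this]
    exact Tl.mul_mem (ratCast_mem _) hx

lemma sq_coeff_mem (k : ℕ) : coeff (R := K3) k Sq ∈ Tl := by
  rw [Sq, coeff_mk]
  split_ifs with h
  · refine Tl.mul_mem (ratCast_mem _) (Tl.pow_mem ?_ _)
    rw [show (4 : K3) = ((4 : ℚ) : K3) by norm_cast]
    exact div_ratCast_mem _ be_mem
  · exact Tl.zero_mem

lemma ex_coeff_mem (k : ℕ) : coeff (R := K3) k Ex ∈ Tl := by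
  rw [Ex, coeff_mk]
  split_ifs with h1 h2
  · exact al_mem
  · rw [show ((k : ℕ) : K3) = (((k : ℚ) : ℚ) : K3) by norm_cast]
    refine div_ratCast_mem _ (Tl.mul_mem (Tl.add_mem al_mem ?_) (Tl.pow_mem be_mem _))
    refine div_be_mem (Tl.mul_mem ?_ ga_mem)
    rw [show (2 : K3) = ((2 : ℚ) : K3) by norm_cast]
    exact ratCast_mem _
  · exact Tl.zero_mem

lemma mul_coeff_mem {f g : PowerSeries K3} (hf : ∀ i, coeff (R := K3) i f ∈ Tl)
    (hg : ∀ i, coeff (R := K3) i g ∈ Tl) (k : ℕ) : coeff (R := K3) k (f * g) ∈ Tl := by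
  rw [coeff_mul]
  exact Subalgebra.sum_mem _ fun p _ => Tl.mul_mem (hf _) (hg _)

lemma pow_coeff_mem (n : ℕ) : ∀ k, coeff (R := K3) k (Ex ^ n) ∈ Tl := by
  induction n with
  | zero =>
    intro k
    rw [pow_zero, coeff_one]
    split_ifs
    · exact Tl.one_mem
    · exact Tl.zero_mem
  | succ n ih =>
    intro k
    rw [pow_succ]
    exact mul_coeff_mem ih ex_coeff_mem k

lemma expEx_coeff_mem (k : ℕ) : coeff (R := K3) k ExpEx ∈ Tl := by
  rw [ExpEx, coeff_mk]
  refine Subalgebra.sum_mem _ fun n _ => ?_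
  rw [show ((n.factorial : ℕ) : K3) = (((n.factorial : ℚ) : ℚ) : K3) by norm_cast]
  exact div_ratCast_mem _ (pow_coeff_mem n k)

lemma phi_mem (k : ℕ) : phi k ∈ Tl :=
  mul_coeff_mem sq_coeff_mem expEx_coeff_mem k

lemma redGamma_X0 : redGamma (MvPolynomial.X 0) = MvPolynomial.X 0 := by
  simp [redGamma]

lemma redGamma_X1 : redGamma (MvPolynomial.X 1) = MvPolynomial.X 1 := by
  simp [redGamma]

lemma redGamma_X2 : redGamma (MvPolynomial.X 2) = 0 := by
  simp [redGamma]

lemma gamma_mul_red {c : K3} (hc : c ∈ Tl) {P : R3}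
    (hP : algebraMap R3 K3 P = ga * c) : redGamma P = 0 := by
  obtain ⟨n, r, hr⟩ := hc
  have h1 : algebraMap R3 K3 (MvPolynomial.X 1 ^ n * P)
      = algebraMap R3 K3 (MvPolynomial.X 2 * r) := by
    rw [map_mul, map_pow, hP, map_mul,
      show algebraMap R3 K3 (MvPolynomial.X 1) = be from rfl,
      show algebraMap R3 K3 (MvPolynomial.X 2) = ga from rfl, ← hr]
    ring
  have h2 := algR3_injective h1
  have h3 := congrArg redGamma h2
  rw [map_mul, map_mul, map_pow, redGamma_X1, redGamma_X2, zero_mul] at h3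
  rcases mul_eq_zero.mp h3 with h | h
  · exact absurd h (pow_ne_zero n (MvPolynomial.X_ne_zero 1))
  · exact h

/-- With `f̄_i^g ∈ ℚ[α,β]` the image of `f_i^g` under `γ ↦ 0` and
`Ī_g = (f̄_1^g, f̄_2^g)`, for every `g ≥ 1` one has
`f̄_1^{g+1} = α f̄_1^g + g² f̄_2^g`, `f̄_2^{g+1} = β f̄_1^g`, and
`β · Ī_g ⊆ Ī_{g+1}`. -/
theorem statement10 (g : ℕ) (hg : 1 ≤ g) (F1 F2 F3 G1 G2 : R3)
    (hF1 : algebraMap R3 K3 F1 = f1 g) (hF2 : algebraMap R3 K3 F2 = f2 g)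
    (hF3 : algebraMap R3 K3 F3 = f3 g)
    (hG1 : algebraMap R3 K3 G1 = f1 (g + 1))
    (hG2 : algebraMap R3 K3 G2 = f2 (g + 1)) :
    redGamma G1 = MvPolynomial.X 0 * redGamma F1 +
      (g : MvPolynomial (Fin 2) ℚ) ^ 2 * redGamma F2 ∧
    redGamma G2 = MvPolynomial.X 1 * redGamma F1 ∧
    ∀ x ∈ Ideal.span {redGamma F1, redGamma F2},
      MvPolynomial.X 1 * x ∈ Ideal.span {redGamma G1, redGamma G2} := by
  obtain ⟨j, rfl⟩ : ∃ j, g = j + 1 := ⟨g - 1, by omega⟩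
  -- first identity, already at the level of R3
  have hR1 : G1 = MvPolynomial.X 0 * F1 + ((j:R3) + 1) ^ 2 * F2 := by
    apply algR3_injective
    rw [hG1, key1 (j+1) (by omega), map_add, map_mul, map_mul, map_pow, hF1, hF2, map_add,
      map_natCast, map_one, show algebraMap R3 K3 (MvPolynomial.X 0) = al from rfl]
    push_cast
    ring
  have bar1 : redGamma G1 = MvPolynomial.X 0 * redGamma F1 +
      ((j+1 : ℕ) : MvPolynomial (Fin 2) ℚ) ^ 2 * redGamma F2 := by
    rw [hR1, map_add, map_mul, map_mul, map_pow, redGamma_X0, map_add, map_natCast, map_one]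
    push_cast
    ring
  -- second identity, via the γ-divisibility argument
  have hcc : 2 * ((j+1).factorial : K3) / ((j:K3)+2) * phi j ∈ Tl := by
    refine Tl.mul_mem ?_ (phi_mem j)
    rw [show (2 * ((j+1).factorial : K3) : K3) = (((2 * (j+1).factorial : ℕ) : ℚ) : K3) by
        push_cast; ring,
      show ((j:K3)+2) = (((j+2 : ℕ) : ℚ) : K3) by push_cast; ring]
    exact div_ratCast_mem _ (ratCast_mem _)
  have hP : algebraMap R3 K3 (G2 - MvPolynomial.X 1 * F1)
      = ga * (2 * ((j+1).factorial : K3) / ((j:K3)+2) * phi j) := by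
    rw [map_sub, map_mul, hG2, hF1, show algebraMap R3 K3 (MvPolynomial.X 1) = be from rfl,
      key2 j]
    ring
  have bar2 : redGamma G2 = MvPolynomial.X 1 * redGamma F1 := by
    have h0 := gamma_mul_red hcc hP
    rw [map_sub, map_mul, redGamma_X1, sub_eq_zero] at h0
    exact h0
  refine ⟨by exact_mod_cast bar1, bar2, ?_⟩
  -- ideal containment
  intro x hx
  have hgq : ((j+1 : ℕ) : ℚ) ≠ 0 := by positivity
  rw [Ideal.mem_span_pair] at hx
  obtain ⟨a, b, rfl⟩ := hx
  have m1 : MvPolynomial.X 1 * redGamma F1 ∈ Ideal.span {redGamma G1, redGamma G2} := by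
    rw [← bar2]
    exact Ideal.subset_span (by simp)
  have m2 : MvPolynomial.X 1 * redGamma F2 ∈ Ideal.span {redGamma G1, redGamma G2} := by
    have key : MvPolynomial.X 1 * redGamma F2 =
        MvPolynomial.C (((j+1 : ℕ) : ℚ) ^ 2)⁻¹ *
          (MvPolynomial.X 1 * redGamma G1 - MvPolynomial.X 0 * redGamma G2) := by
      have hCn : ((j+1:ℕ) : MvPolynomial (Fin 2) ℚ) = MvPolynomial.C (((j+1:ℕ):ℚ)) :=
        (map_natCast (MvPolynomial.C : ℚ →+* MvPolynomial (Fin 2) ℚ) (j+1)).symm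
      rw [bar1, bar2, hCn, ← MvPolynomial.C_pow]
      have hone : MvPolynomial.C ((((j+1:ℕ):ℚ))^2)⁻¹ *
          (MvPolynomial.C ((((j+1:ℕ):ℚ))^2) : MvPolynomial (Fin 2) ℚ) = 1 := by
        rw [← MvPolynomial.C_mul, inv_mul_cancel₀ (by positivity), MvPolynomial.C_1]
      linear_combination (-(MvPolynomial.X 1 * redGamma F2)) * hone
    rw [key]
    exact Ideal.mul_mem_left _ _ (Ideal.sub_mem _
      (Ideal.mul_mem_left _ _ (Ideal.subset_span (by simp)))
      (Ideal.mul_mem_left _ _ (Ideal.subset_span (by simp))))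
  have : MvPolynomial.X 1 * (a * redGamma F1 + b * redGamma F2)
      = a * (MvPolynomial.X 1 * redGamma F1) + b * (MvPolynomial.X 1 * redGamma F2) := by ring
  rw [this]
  exact Ideal.add_mem _ (Ideal.mul_mem_left _ _ m1) (Ideal.mul_mem_left _ _ m2)
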